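/- Let G be the structure group of a finite solution (X,r) with its canonical left brace structure, and let n = [G : soc(G)] < ∞. Then I = {n·g : g ∈ G} (n-fold additive multiples) is an ideal of the left brace G: it is a normal subgroup of (G,·), an additive subgroup, invariant under all L_h for h ∈ G, and I ⊆ soc(G). -/

import Mathlib

/-- A left brace: an abelian group `(B,+)` and a group `(B,·)` with the
compatibility law `a·(b+c) + a = a·b + a·c`. -/
class LeftBrace (B : Type*) extends AddCommGroup B, Group B where
  left_compat : ∀ a b c : B, a * (b + c) + a = a * b + a * c

variable {B : Type*} [LeftBrace B]

/-- The star operation `a * b = a·b - a - b` of a left brace. -/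
def bstar (a b : B) : B := a * b - a - b

/-- The map `L_a : b ↦ a·b - a`. -/
def lmap (a b : B) : B := a * b - a

/-- The socle of a left brace. -/
def socle (B : Type*) [LeftBrace B] : Set B := {a : B | ∀ b : B, a * b = a + b}

/-- Iterated star products: `eStar a b m = a*(a*(⋯*(a*b)))` with `a` occurring `m` times. -/
def eStar (a : B) (b : B) : ℕ → B
  | 0 => b
  | k + 1 => bstar a (eStar a b k)

/-- The additive subgroup generated by all `a*c` with `a ∈ A`, `c ∈ C`. -/
def starSub (A C : AddSubgroup B) : AddSubgroup B :=
  AddSubgroup.closure {x : B | ∃ a ∈ A, ∃ c ∈ C, x = bstar a c}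

/-- Rump's left chain: `leftPow B n = B^{n+1}`, i.e. `B^1 = B`, `B^{n+1} = B * B^n`. -/
def leftPow (B : Type*) [LeftBrace B] : ℕ → AddSubgroup B
  | 0 => ⊤
  | n + 1 => starSub ⊤ (leftPow B n)

/-- Rump's right chain: `rightPow B n = B^{(n+1)}`, i.e. `B^{(1)} = B`, `B^{(n+1)} = B^{(n)} * B`. -/
def rightPow (B : Type*) [LeftBrace B] : ℕ → AddSubgroup B
  | 0 => ⊤
  | n + 1 => starSub (rightPow B n) ⊤

/-- The commutator `[g,h] = g⁻¹h⁻¹gh`. -/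
def pcomm {G : Type*} [Group G] (g h : G) : G := g⁻¹ * h⁻¹ * g * h

/-- Iterated commutator `engel g h n = [[…[[g,h],h]…],h]` with `h` occurring `n` times. -/
def engel {G : Type*} [Group G] (g h : G) : ℕ → G
  | 0 => g
  | k + 1 => pcomm (engel g h k) h

/-- A group is Engel if every iterated commutator eventually vanishes. -/
def IsEngelGroup (G : Type*) [Group G] : Prop :=
  ∀ g h : G, ∃ n : ℕ, 0 < n ∧ engel g h n = 1

def r12 {X : Type*} (r : X × X → X × X) : X × X × X → X × X × X :=
  fun p => ((r (p.1, p.2.1)).1, (r (p.1, p.2.1)).2, p.2.2)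

def r23 {X : Type*} (r : X × X → X × X) : X × X × X → X × X × X :=
  fun p => (p.1, r p.2)

/-- A non-degenerate involutive set-theoretic solution of the Yang–Baxter equation. -/
structure YBSolution (X : Type u) where
  r : X × X → X × X
  ybe : r12 r ∘ r23 r ∘ r12 r = r23 r ∘ r12 r ∘ r23 r
  nondegL : ∀ x : X, Function.Bijective fun y => (r (x, y)).1
  nondegR : ∀ y : X, Function.Bijective fun x => (r (x, y)).2
  involutive : ∀ p : X × X, r (r p) = p

/-- `G`, with its left brace structure and the map `ι : X → G`, is the structure group
`G(X,r)` with its canonical left brace structure: `ι` is injective, `(G,+)` is free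
abelian with basis `ι(X)`, `ˣy = L_x(y)` holds, the defining relations hold, and `G`
has the universal property of the group presented by these relations. -/
structure IsCanonicalBrace {X : Type u} (sol : YBSolution X) (G : Type u) [LeftBrace G]
    (ι : X → G) : Prop where
  inj : Function.Injective ι
  basis : ∃ b : Module.Basis X ℤ G, ∀ x : X, b x = ι x
  act : ∀ x y : X, lmap (ι x) (ι y) = ι (sol.r (x, y)).1
  rel : ∀ x y : X, ι x * ι y = ι (sol.r (x, y)).1 * ι (sol.r (x, y)).2
  univ : ∀ {H : Type u} [Group H] (f : X → H),
    (∀ x y : X, f x * f y = f (sol.r (x, y)).1 * f (sol.r (x, y)).2) →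
    ∃! φ : G →* H, ∀ x : X, φ (ι x) = f x

/-!
In a left brace `B`, the socle is an additive subgroup whose left cosets `x + soc B` coincide
with the multiplicative cosets `x · soc B`, because `x · a = x + λ_x(a)` and `λ_x` permutes the
socle. Hence `n = [B : soc B]` is also the additive index, and `n • g ∈ soc B` for every `g`.
The additive subgroup `n • B` is `λ`-invariant since each `λ_h` is additive, and an additive
subgroup inside the socle is a multiplicative subgroup on which conjugation by `h` acts as `λ_h`.
-/

namespace LeftBrace

theorem one_eq_zero : (1 : B) = 0 := by
  simpa using left_compat (1 : B) 0 0

theorem mul_eq_add_lmap (a b : B) : a * b = a + lmap a b := by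
  unfold lmap; abel

def lmapHom (a : B) : B →+ B where
  toFun := lmap a
  map_zero' := sub_eq_zero.2 <| by rw [← one_eq_zero, mul_one]
  map_add' b c := by
    simp only [lmap]
    rw [eq_sub_of_add_eq (left_compat a b c)]
    abel

theorem lmap_nsmul (a b : B) (n : ℕ) : lmap a (n • b) = n • lmap a b :=
  map_nsmul (lmapHom a) n b

theorem lmap_one (b : B) : lmap 1 b = b := by
  rw [lmap, one_mul, one_eq_zero, sub_zero]

theorem lmap_mul (a b c : B) : lmap (a * b) c = lmap a (lmap b c) := by
  have h : lmap a (b * c - b) = lmap a (b * c) - lmap a b := map_sub (lmapHom a) _ _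
  rw [show lmap b c = b * c - b from rfl, h]
  simp only [lmap, mul_assoc]
  abel

theorem mem_socle_iff (a : B) : a ∈ socle B ↔ ∀ b : B, lmap a b = b :=
  forall_congr' fun b => by rw [mul_eq_add_lmap, add_right_inj]

theorem mul_mem_socle {a b : B} (ha : a ∈ socle B) (hb : b ∈ socle B) : a * b ∈ socle B := by
  rw [mem_socle_iff] at *
  intro c
  rw [lmap_mul, hb, ha]

theorem inv_mem_socle {a : B} (ha : a ∈ socle B) : a⁻¹ ∈ socle B := by
  rw [mem_socle_iff] at *
  intro c
  simpa [← lmap_mul, lmap_one] using (ha (lmap a⁻¹ c)).symm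

theorem inv_eq_neg_of_mem_socle {a : B} (ha : a ∈ socle B) : a⁻¹ = -a := by
  have h : a * a⁻¹ = a + a⁻¹ := ha a⁻¹
  rw [mul_inv_cancel, one_eq_zero] at h
  exact (neg_eq_of_add_eq_zero_right h.symm).symm

theorem conj_mem_socle {a : B} (ha : a ∈ socle B) (h : B) : h * a * h⁻¹ ∈ socle B := by
  rw [mem_socle_iff] at *
  intro c
  rw [lmap_mul, lmap_mul, ha, ← lmap_mul, mul_inv_cancel, lmap_one]

theorem lmap_eq_conj_of_mem_socle {a : B} (ha : a ∈ socle B) (h : B) :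
    lmap h a = h * a * h⁻¹ := by
  have hconj : h * a * h⁻¹ * h = h * a * h⁻¹ + h := conj_mem_socle ha h h
  rw [inv_mul_cancel_right] at hconj
  exact sub_eq_of_eq_add hconj

theorem lmap_mem_socle_iff (h a : B) : lmap h a ∈ socle B ↔ a ∈ socle B := by
  refine ⟨fun ha => ?_, fun ha => ?_⟩
  · have hinv := conj_mem_socle ha h⁻¹
    rwa [← lmap_eq_conj_of_mem_socle ha, ← lmap_mul, inv_mul_cancel, lmap_one] at hinv
  · rw [lmap_eq_conj_of_mem_socle ha]
    exact conj_mem_socle ha h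

theorem inv_mul_mem_socle_iff (x y : B) : x⁻¹ * y ∈ socle B ↔ -x + y ∈ socle B := by
  have h : lmap x (x⁻¹ * y) = -x + y := by
    rw [lmap, mul_inv_cancel_left]
    abel
  rw [← h, lmap_mem_socle_iff]

variable (B) in
def socleAddSubgroup : AddSubgroup B where
  carrier := socle B
  zero_mem' := by
    rw [← one_eq_zero, mem_socle_iff]
    exact lmap_one
  add_mem' {a b} ha hb := by
    rw [← ha b]
    exact mul_mem_socle ha hb
  neg_mem' ha := by
    rw [← inv_eq_neg_of_mem_socle ha]
    exact inv_mem_socle ha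

theorem index_eq_index_socleAddSubgroup (H : Subgroup B) (hH : (H : Set B) = socle B) :
    H.index = (socleAddSubgroup B).index :=
  Nat.card_congr <| Quotient.congrRight fun x y => by
    rw [QuotientGroup.leftRel_apply, QuotientAddGroup.leftRel_apply, ← SetLike.mem_coe, hH]
    exact inv_mul_mem_socle_iff x y

def _root_.AddSubgroup.toSubgroupOfLESocle (A : AddSubgroup B) (hA : (A : Set B) ⊆ socle B) :
    Subgroup B where
  carrier := A
  one_mem' := by
    rw [SetLike.mem_coe, one_eq_zero]
    exact A.zero_mem
  mul_mem' {a b} ha hb := by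
    rw [SetLike.mem_coe, hA ha b]
    exact A.add_mem ha hb
  inv_mem' {a} ha := by
    rw [SetLike.mem_coe, inv_eq_neg_of_mem_socle (hA ha)]
    exact A.neg_mem ha

theorem _root_.AddSubgroup.toSubgroupOfLESocle_normal (A : AddSubgroup B)
    (hA : (A : Set B) ⊆ socle B) (hL : ∀ h, ∀ a ∈ A, lmap h a ∈ A) :
    (A.toSubgroupOfLESocle hA).Normal where
  conj_mem a ha h := by
    rw [← lmap_eq_conj_of_mem_socle (hA ha)]
    exact hL h a ha

end LeftBrace

theorem stmt15_general {G : Type u} [LeftBrace G] (H : Subgroup G) (hH : (H : Set G) = socle G) :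
    (∃ A : AddSubgroup G, (A : Set G) = {x : G | ∃ g : G, x = H.index • g}) ∧
    (∃ N : Subgroup G, (N : Set G) = {x : G | ∃ g : G, x = H.index • g} ∧ N.Normal) ∧
    (∀ h x : G, (∃ g : G, x = H.index • g) → ∃ g : G, lmap h x = H.index • g) ∧
    {x : G | ∃ g : G, x = H.index • g} ⊆ socle G := by
  set A := (nsmulAddMonoidHom (α := G) H.index).range
  have hA : (A : Set G) = {x : G | ∃ g : G, x = H.index • g} := by
    ext x
    simp [A, eq_comm]
  have hsoc : (A : Set G) ⊆ socle G := by
    rintro _ ⟨g, rfl⟩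
    rw [LeftBrace.index_eq_index_socleAddSubgroup H hH]
    exact (LeftBrace.socleAddSubgroup G).nsmul_index_mem g
  have hL : ∀ h x : G, (∃ g : G, x = H.index • g) → ∃ g : G, lmap h x = H.index • g := by
    rintro h _ ⟨g, rfl⟩
    exact ⟨lmap h g, LeftBrace.lmap_nsmul h g _⟩
  have hLA : ∀ h, ∀ a ∈ A, lmap h a ∈ A := fun h a ha => by
    rw [← SetLike.mem_coe, hA] at ha ⊢
    exact hL h a ha
  exact ⟨⟨A, hA⟩, ⟨A.toSubgroupOfLESocle hsoc, hA, A.toSubgroupOfLESocle_normal hsoc hLA⟩, hL,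
    hA ▸ hsoc⟩

theorem stmt15 {X : Type u} [Finite X] (sol : YBSolution X)
    {G : Type u} [LeftBrace G] (ι : X → G) (hG : IsCanonicalBrace sol G ι)
    (H : Subgroup G) (hH : (H : Set G) = socle G) (hfi : H.FiniteIndex) :
    (∃ A : AddSubgroup G, (A : Set G) = {x : G | ∃ g : G, x = H.index • g}) ∧
    (∃ N : Subgroup G, (N : Set G) = {x : G | ∃ g : G, x = H.index • g} ∧ N.Normal) ∧
    (∀ h x : G, (∃ g : G, x = H.index • g) → ∃ g : G, lmap h x = H.index • g) ∧
    {x : G | ∃ g : G, x = H.index • g} ⊆ socle G :=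
  stmt15_general H hH
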